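/- Let E be an effect on H with Naimark dilation E = J*PJ (J : H → K an isometry, P a projection on K), and let A be an effect on H. Then A ≤ E if and only if A = J*QPJ for some effect Q on K that commutes with P. -/

import Mathlib

/-!
Write `A = S* S`. If `A ≤ E = (PJ)* (PJ)`, then `‖S x‖ ≤ ‖PJ x‖` for all `x`, so by Douglas'
factorisation `S = C P J` for a contraction `C : K → H` (the extension by continuity of
`PJ x ↦ S x` to the closure of the range of `PJ`, and `0` on its orthogonal complement).
Hence `A = J* (P C* C P) P J`, and `Q = P C* C P` is an effect commuting with `P`.
Conversely, if `Q` commutes with `P` then `E - J* Q P J = (PJ)* (1 - Q) (PJ) ≥ 0`.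
-/

theorem LinearMap.denseRange_codRestrict_topologicalClosure_range {R M M₂ : Type*} [Semiring R]
    [AddCommMonoid M] [Module R M] [AddCommMonoid M₂] [Module R M₂] [TopologicalSpace M₂]
    [ContinuousAdd M₂] [ContinuousConstSMul R M₂] (f : M →ₗ[R] M₂) :
    DenseRange (f.codRestrict (range f).topologicalClosure
      fun x => (range f).le_topologicalClosure (mem_range_self f x)) := by
  intro y
  rw [Topology.IsInducing.subtypeVal.closure_eq_preimage_closure_image, ← Set.range_comp]
  exact y.2

theorem IsIdempotentElem.sub_mul_eq_mul_one_sub_mul {R : Type*} [Ring R] {p q : R}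
    (hp : IsIdempotentElem p) (hqp : Commute q p) : p - q * p = p * (1 - q) * p := by
  rw [mul_sub, mul_one, sub_mul, hp.eq, mul_assoc, hqp.eq, ← mul_assoc, hp.eq]

namespace ContinuousLinearMap

theorem exists_norm_le_one_comp_eq_of_norm_apply_le {𝕜 E F G : Type*} [RCLike 𝕜]
    [NormedAddCommGroup E] [NormedSpace 𝕜 E]
    [NormedAddCommGroup F] [InnerProductSpace 𝕜 F] [CompleteSpace F]
    [NormedAddCommGroup G] [NormedSpace 𝕜 G] [CompleteSpace G]
    (T : E →L[𝕜] F) (S : E →L[𝕜] G) (h : ∀ x, ‖S x‖ ≤ ‖T x‖) :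
    ∃ C : F →L[𝕜] G, ‖C‖ ≤ 1 ∧ C ∘L T = S := by
  set M := (LinearMap.range (T : E →ₗ[𝕜] F)).topologicalClosure
  set e : E →ₗ[𝕜] M := (T : E →ₗ[𝕜] F).codRestrict M
    fun x => (LinearMap.range _).le_topologicalClosure (LinearMap.mem_range_self _ x)
  have he : DenseRange e := LinearMap.denseRange_codRestrict_topologicalClosure_range _
  have hS : ∀ x, ‖S x‖ ≤ 1 * ‖e x‖ := fun x => (one_mul ‖e x‖).symm ▸ h x
  set g : M →L[𝕜] G := (S : E →ₗ[𝕜] G).extendOfNorm e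
  refine ⟨g ∘L M.orthogonalProjectionOnto, ?_, ?_⟩
  · calc ‖g ∘L M.orthogonalProjectionOnto‖ ≤ ‖g‖ * ‖M.orthogonalProjectionOnto‖ :=
          opNorm_comp_le _ _
      _ ≤ 1 * 1 := mul_le_mul (LinearMap.opNorm_extendOfNorm_le he zero_le_one hS)
          M.orthogonalProjectionOnto_norm_le (norm_nonneg _) zero_le_one
      _ = 1 := one_mul 1
  · ext x
    have : M.orthogonalProjectionOnto (T x) = e x :=
      M.orthogonalProjectionOnto_mem_subspace_eq_self (e x)
    simp only [comp_apply, this]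
    exact LinearMap.extendOfNorm_eq he ⟨1, hS⟩ x

section InnerProductSpace

variable {𝕜 E F G : Type*} [RCLike 𝕜]
  [NormedAddCommGroup E] [InnerProductSpace 𝕜 E]
  [NormedAddCommGroup F] [InnerProductSpace 𝕜 F] [CompleteSpace F]
  [NormedAddCommGroup G] [InnerProductSpace 𝕜 G] [CompleteSpace G]

theorem norm_apply_le_of_adjoint_comp_self_le [CompleteSpace E] {S : E →L[𝕜] G}
    {T : E →L[𝕜] F} (h : adjoint S ∘L S ≤ adjoint T ∘L T) (x : E) : ‖S x‖ ≤ ‖T x‖ := by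
  have := ((le_def _ _).mp h).re_inner_nonneg_left x
  rw [sub_apply, inner_sub_left, map_sub, ← apply_norm_sq_eq_inner_adjoint_left,
    ← apply_norm_sq_eq_inner_adjoint_left, sub_nonneg] at this
  exact (sq_le_sq₀ (norm_nonneg _) (norm_nonneg _)).mp this

theorem isPositive_one_sub_adjoint_comp_self [CompleteSpace E] {C : E →L[𝕜] F} (hC : ‖C‖ ≤ 1) :
    (1 - adjoint C ∘L C).IsPositive := by
  refine isPositive_def'.mpr ⟨.sub (.one _) (isPositive_adjoint_comp_self C).isSelfAdjoint,
    fun x => ?_⟩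
  rw [reApplyInnerSelf_apply, sub_apply, one_apply_eq_self, inner_sub_left, map_sub,
    ← apply_norm_sq_eq_inner_adjoint_left, inner_self_eq_norm_sq, sub_nonneg]
  exact pow_le_pow_left₀ (norm_nonneg _) ((C.le_of_opNorm_le hC x).trans_eq (one_mul _)) 2

end InnerProductSpace

theorem exists_norm_le_one_eq_adjoint_comp_self_of_le {E F : Type*}
    [NormedAddCommGroup E] [InnerProductSpace ℂ E] [CompleteSpace E]
    [NormedAddCommGroup F] [InnerProductSpace ℂ F] [CompleteSpace F]
    {A : E →L[ℂ] E} (hA : 0 ≤ A) (T : E →L[ℂ] F) (h : A ≤ adjoint T ∘L T) :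
    ∃ C : F →L[ℂ] E, ‖C‖ ≤ 1 ∧ A = adjoint (C ∘L T) ∘L (C ∘L T) := by
  obtain ⟨S, rfl⟩ := CStarAlgebra.nonneg_iff_eq_star_mul_self.mp hA
  obtain ⟨C, hC, rfl⟩ := exists_norm_le_one_comp_eq_of_norm_apply_le T S
    (norm_apply_le_of_adjoint_comp_self_le h)
  exact ⟨C, hC, rfl⟩

end ContinuousLinearMap

open ContinuousLinearMap

theorem stmt_7_general {H K : Type*}
    [NormedAddCommGroup H] [InnerProductSpace ℂ H] [CompleteSpace H]
    [NormedAddCommGroup K] [InnerProductSpace ℂ K] [CompleteSpace K]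
    (E : H →L[ℂ] H)
    (J : H →L[ℂ] K)
    (P : K →L[ℂ] K) (hPsa : IsSelfAdjoint P) (hPidem : IsIdempotentElem P)
    (hdil : E = ((adjoint J).comp P).comp J)
    (A : H →L[ℂ] H) (hA : A.IsPositive) :
    (E - A).IsPositive ↔
      ∃ Q : K →L[ℂ] K, Q.IsPositive ∧ (1 - Q).IsPositive ∧ Commute Q P ∧
        A = (((adjoint J).comp Q).comp P).comp J := by
  have hPP : P ∘L P = P := hPidem.eq
  have hPJ : adjoint (P ∘L J) = adjoint J ∘L P := by rw [adjoint_comp, hPsa.adjoint_eq]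
  subst hdil
  constructor
  · intro hEA
    have hAE : A ≤ adjoint (P ∘L J) ∘L (P ∘L J) := by
      rw [hPJ, comp_assoc, ← comp_assoc P, hPP]
      exact (le_def _ _).mpr hEA
    obtain ⟨C, hC, rfl⟩ :=
      exists_norm_le_one_eq_adjoint_comp_self_of_le ((nonneg_iff_isPositive A).mpr hA) _ hAE
    have hCP : ‖C ∘L P‖ ≤ 1 := (opNorm_comp_le C P).trans
      (mul_le_one₀ hC (norm_nonneg P) (IsStarProjection.norm_le P ⟨hPidem, hPsa⟩))
    refine ⟨adjoint (C ∘L P) ∘L (C ∘L P), isPositive_adjoint_comp_self _,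
      isPositive_one_sub_adjoint_comp_self hCP, ?_, ?_⟩
    · show _ ∘L P = P ∘L _
      simp only [adjoint_comp, hPsa.adjoint_eq, comp_assoc, hPP]
      rw [← comp_assoc P P, hPP]
    · simp only [adjoint_comp, hPsa.adjoint_eq, comp_assoc, hPP]
  · rintro ⟨Q, -, hQ1, hQP, rfl⟩
    convert hQ1.adjoint_conj (P ∘L J) using 1
    calc adjoint J ∘L P ∘L J - adjoint J ∘L Q ∘L P ∘L J = adjoint J ∘L (P - Q * P) ∘L J := by
          simp only [sub_comp, comp_sub, mul_def, comp_assoc]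
      _ = adjoint J ∘L (P * (1 - Q) * P) ∘L J := by
          rw [hPidem.sub_mul_eq_mul_one_sub_mul hQP]
      _ = adjoint (P ∘L J) ∘L (1 - Q) ∘L P ∘L J := by simp only [hPJ, mul_def, comp_assoc]

/-- Let `E = J*PJ` be a Naimark dilation of the effect `E`. For an effect `A`:
`A ≤ E` iff `A = J* Q P J` for some effect `Q` on `K` commuting with `P`. -/
theorem stmt_7 {H K : Type*}
    [NormedAddCommGroup H] [InnerProductSpace ℂ H] [CompleteSpace H]
    [NormedAddCommGroup K] [InnerProductSpace ℂ K] [CompleteSpace K]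
    (E : H →L[ℂ] H) (hE : E.IsPositive) (hE1 : (1 - E).IsPositive)
    (J : H →L[ℂ] K) (hJ : (adjoint J).comp J = 1)
    (P : K →L[ℂ] K) (hPsa : IsSelfAdjoint P) (hPidem : IsIdempotentElem P)
    (hdil : E = ((adjoint J).comp P).comp J)
    (A : H →L[ℂ] H) (hA : A.IsPositive) (hA1 : (1 - A).IsPositive) :
    (E - A).IsPositive ↔
      ∃ Q : K →L[ℂ] K, Q.IsPositive ∧ (1 - Q).IsPositive ∧ Commute Q P ∧
        A = (((adjoint J).comp Q).comp P).comp J :=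
  stmt_7_general E J P hPsa hPidem hdil A hA
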